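/- In ℝ² with K = ℝ²₊, let A₁ be the triangle with vertices (0,0), (3/4,0), (0,3/4), A₂ the trapezium with vertices (1,0), (3/4,0), (0,3/4), (0,1), B₁ the triangle with vertices (0,0), (1,0), (1/2,1/2), and B₂ the triangle with vertices (0,0), (1/2,1/2), (0,1). Then A₁ ∪ A₂ = B₁ ∪ B₂ (so (A₁ ∪ A₂) ⊆ (B₁ ∪ B₂) − K), yet A_i ⊄ B_j − K for all i, j ∈ {1,2}. In particular, the relation ≤_K^u holds for the unions while ≤_K^U fails for the indexed families. -/

import Mathlib

open Set Pointwise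

noncomputable def K4 : Set (ℝ × ℝ) := {p | 0 ≤ p.1 ∧ 0 ≤ p.2}
noncomputable def A4₁ : Set (ℝ × ℝ) := convexHull ℝ {((0:ℝ), (0:ℝ)), (3/4, 0), (0, 3/4)}
noncomputable def A4₂ : Set (ℝ × ℝ) := convexHull ℝ {((1:ℝ), (0:ℝ)), (3/4, 0), (0, 3/4), (0, 1)}
noncomputable def B4₁ : Set (ℝ × ℝ) := convexHull ℝ {((0:ℝ), (0:ℝ)), (1, 0), (1/2, 1/2)}
noncomputable def B4₂ : Set (ℝ × ℝ) := convexHull ℝ {((0:ℝ), (0:ℝ)), (1/2, 1/2), (0, 1)}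

/-!
Both unions are the triangle with vertices `(0, 0)`, `(1, 0)`, `(0, 1)`. For the product order on
`ℝ × ℝ`, `s - K` is the lower closure of `s`. As `B₁` lies below the line `y = 1/2` and `B₂` left
of `x = 1/2`, the point `(0, 3/4)` of `A₁ ∩ A₂` is not in `B₁ - K`, and `(3/4, 0)` is not in
`B₂ - K`.
-/

section ConvexCombination

variable {𝕜 E : Type*} [Field 𝕜] [LinearOrder 𝕜] [IsStrictOrderedRing 𝕜] [AddCommGroup E]
  [Module 𝕜 E] {a b c d : E} {α β γ δ : 𝕜}

theorem smul_add_smul_add_smul_mem_convexHull (hα : 0 ≤ α) (hβ : 0 ≤ β) (hγ : 0 ≤ γ)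
    (h : α + β + γ = 1) : α • a + β • b + γ • c ∈ convexHull 𝕜 {a, b, c} := by
  have := (convex_convexHull 𝕜 ({a, b, c} : Set E)).sum_mem (t := Finset.univ)
    (w := ![α, β, γ]) (z := ![a, b, c]) ?_ ?_ ?_
  · simpa [Fin.sum_univ_three] using this
  · simp [Fin.forall_fin_succ, hα, hβ, hγ]
  · simpa [Fin.sum_univ_three] using h
  · exact fun i _ ↦ subset_convexHull 𝕜 _ (by fin_cases i <;> simp)

theorem smul_add_smul_add_smul_add_smul_mem_convexHull (hα : 0 ≤ α) (hβ : 0 ≤ β)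
    (hγ : 0 ≤ γ) (hδ : 0 ≤ δ) (h : α + β + γ + δ = 1) :
    α • a + β • b + γ • c + δ • d ∈ convexHull 𝕜 {a, b, c, d} := by
  have := (convex_convexHull 𝕜 ({a, b, c, d} : Set E)).sum_mem (t := Finset.univ)
    (w := ![α, β, γ, δ]) (z := ![a, b, c, d]) ?_ ?_ ?_
  · simpa [Fin.sum_univ_four] using this
  · simp [Fin.forall_fin_succ, hα, hβ, hγ, hδ]
  · simpa [Fin.sum_univ_four] using h
  · exact fun i _ ↦ subset_convexHull 𝕜 _ (by fin_cases i <;> simp)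

end ConvexCombination

def unitTriangle : Set (ℝ × ℝ) := {p | 0 ≤ p.1 ∧ 0 ≤ p.2 ∧ p.1 + p.2 ≤ 1}

theorem convex_unitTriangle : Convex ℝ unitTriangle := by
  rintro x ⟨hx₁, hx₂, hx₃⟩ y ⟨hy₁, hy₂, hy₃⟩ s t hs ht hst
  simp only [unitTriangle, mem_ofPred_eq, Prod.fst_add, Prod.snd_add, Prod.smul_fst,
    Prod.smul_snd, smul_eq_mul]
  refine ⟨by positivity, by positivity, ?_⟩
  nlinarith

theorem A4₁_union_A4₂ : A4₁ ∪ A4₂ = unitTriangle := by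
  refine (union_subset ?_ ?_).antisymm ?_
  · exact convexHull_min (by norm_num [insert_subset_iff, unitTriangle]) convex_unitTriangle
  · exact convexHull_min (by norm_num [insert_subset_iff, unitTriangle]) convex_unitTriangle
  rintro ⟨x, y⟩ ⟨hx, hy, hsum : x + y ≤ 1⟩
  unfold A4₁ A4₂
  obtain hs | hs := le_or_gt (x + y) (3 / 4)
  · left
    convert smul_add_smul_add_smul_mem_convexHull (a := ((0 : ℝ), (0 : ℝ)))
      (b := ((3 : ℝ) / 4, (0 : ℝ))) (c := ((0 : ℝ), (3 : ℝ) / 4)) (α := 1 - 4 / 3 * (x + y))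
      (β := 4 / 3 * x) (γ := 4 / 3 * y) (by linarith) (by linarith) (by linarith) (by ring)
      using 1
    ext <;> simp only [Prod.smul_mk, smul_eq_mul, Prod.mk_add_mk] <;> ring
  · -- `(x, y) = (x / s) • (s, 0) + (y / s) • (0, s)` with `s = x + y`, and `(s, 0)` splits as
    -- `(4s - 3) • (1, 0) + (4 - 4s) • (3/4, 0)`; likewise `(0, s)`.
    right
    have hs₀ : 0 < x + y := by linarith
    have hs₁ : 0 ≤ 4 * (x + y) - 3 := by linarith
    have hs₂ : 0 ≤ 4 - 4 * (x + y) := by linarith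
    convert smul_add_smul_add_smul_add_smul_mem_convexHull (a := ((1 : ℝ), (0 : ℝ)))
      (b := ((3 : ℝ) / 4, (0 : ℝ))) (c := ((0 : ℝ), (3 : ℝ) / 4)) (d := ((0 : ℝ), (1 : ℝ)))
      (α := (4 * (x + y) - 3) * x / (x + y)) (β := (4 - 4 * (x + y)) * x / (x + y))
      (γ := (4 - 4 * (x + y)) * y / (x + y)) (δ := (4 * (x + y) - 3) * y / (x + y))
      (div_nonneg (mul_nonneg hs₁ hx) hs₀.le) (div_nonneg (mul_nonneg hs₂ hx) hs₀.le)
      (div_nonneg (mul_nonneg hs₂ hy) hs₀.le) (div_nonneg (mul_nonneg hs₁ hy) hs₀.le)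
      (by field_simp; ring) using 1
    ext <;> simp only [Prod.smul_mk, smul_eq_mul, Prod.mk_add_mk] <;> field_simp <;> ring

theorem B4₁_union_B4₂ : B4₁ ∪ B4₂ = unitTriangle := by
  refine (union_subset ?_ ?_).antisymm ?_
  · exact convexHull_min (by norm_num [insert_subset_iff, unitTriangle]) convex_unitTriangle
  · exact convexHull_min (by norm_num [insert_subset_iff, unitTriangle]) convex_unitTriangle
  rintro ⟨x, y⟩ ⟨hx, hy, hsum : x + y ≤ 1⟩
  unfold B4₁ B4₂
  obtain hyx | hxy := le_total y x
  · left
    convert smul_add_smul_add_smul_mem_convexHull (a := ((0 : ℝ), (0 : ℝ)))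
      (b := ((1 : ℝ), (0 : ℝ))) (c := ((1 : ℝ) / 2, (1 : ℝ) / 2)) (α := 1 - x - y)
      (β := x - y) (γ := 2 * y) (by linarith) (by linarith) (by linarith) (by ring) using 1
    ext <;> simp only [Prod.smul_mk, smul_eq_mul, Prod.mk_add_mk] <;> ring
  · right
    convert smul_add_smul_add_smul_mem_convexHull (a := ((0 : ℝ), (0 : ℝ)))
      (b := ((1 : ℝ) / 2, (1 : ℝ) / 2)) (c := ((0 : ℝ), (1 : ℝ))) (α := 1 - x - y)
      (β := 2 * x) (γ := y - x) (by linarith) (by linarith) (by linarith) (by ring) using 1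
    ext <;> simp only [Prod.smul_mk, smul_eq_mul, Prod.mk_add_mk] <;> ring

theorem sub_K4_eq_lowerClosure (s : Set (ℝ × ℝ)) : s - K4 = lowerClosure s := by
  ext x
  simp only [mem_sub, K4, mem_ofPred_eq, SetLike.mem_coe, mem_lowerClosure, Prod.le_def]
  constructor
  · rintro ⟨a, ha, k, ⟨hk₁, hk₂⟩, rfl⟩
    exact ⟨a, ha, by simpa using hk₁, by simpa using hk₂⟩
  · rintro ⟨a, ha, h₁, h₂⟩
    exact ⟨a, ha, a - x, ⟨by simpa using h₁, by simpa using h₂⟩, sub_sub_cancel a x⟩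

theorem notMem_sub_K4 {t L : Set (ℝ × ℝ)} (hL : IsLowerSet L) (htL : t ⊆ L) {p : ℝ × ℝ}
    (hpL : p ∉ L) : p ∉ t - K4 := by
  rw [sub_K4_eq_lowerClosure]
  exact fun hp ↦ hpL ((lowerClosure_le (t := ⟨L, hL⟩)).2 htL hp)

theorem B4₁_subset_snd_le : B4₁ ⊆ Prod.snd ⁻¹' Iic (1 / 2) :=
  convexHull_min (by simp [insert_subset_iff]) <|
    (convex_Iic _).linear_preimage (LinearMap.snd ℝ ℝ ℝ)

theorem B4₂_subset_fst_le : B4₂ ⊆ Prod.fst ⁻¹' Iic (1 / 2) :=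
  convexHull_min (by simp [insert_subset_iff]) <|
    (convex_Iic _).linear_preimage (LinearMap.fst ℝ ℝ ℝ)

/-- A₁ ∪ A₂ = B₁ ∪ B₂ (hence ≤_K^u holds for the unions),
    but A_i ⊄ B_j − K for all i, j, so ≤_K^U fails. -/
theorem stmt_4 :
    A4₁ ∪ A4₂ = B4₁ ∪ B4₂ ∧
    (A4₁ ∪ A4₂) ⊆ (B4₁ ∪ B4₂) - K4 ∧
    ¬ A4₁ ⊆ B4₁ - K4 ∧ ¬ A4₁ ⊆ B4₂ - K4 ∧ ¬ A4₂ ⊆ B4₁ - K4 ∧ ¬ A4₂ ⊆ B4₂ - K4 := by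
  have hAB : A4₁ ∪ A4₂ = B4₁ ∪ B4₂ := A4₁_union_A4₂.trans B4₁_union_B4₂.symm
  obtain ⟨hA₁, hA₂⟩ : ((0 : ℝ), (3 / 4 : ℝ)) ∈ A4₁ ∧ ((0 : ℝ), (3 / 4 : ℝ)) ∈ A4₂ :=
    ⟨subset_convexHull ℝ _ (by simp), subset_convexHull ℝ _ (by simp)⟩
  obtain ⟨hA₁', hA₂'⟩ : ((3 / 4 : ℝ), (0 : ℝ)) ∈ A4₁ ∧ ((3 / 4 : ℝ), (0 : ℝ)) ∈ A4₂ :=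
    ⟨subset_convexHull ℝ _ (by simp), subset_convexHull ℝ _ (by simp)⟩
  have hB₁ : ((0 : ℝ), (3 / 4 : ℝ)) ∉ B4₁ - K4 :=
    notMem_sub_K4 ((isLowerSet_Iic _).preimage monotone_snd) B4₁_subset_snd_le (by norm_num)
  have hB₂ : ((3 / 4 : ℝ), (0 : ℝ)) ∉ B4₂ - K4 :=
    notMem_sub_K4 ((isLowerSet_Iic _).preimage monotone_fst) B4₂_subset_fst_le (by norm_num)
  refine ⟨hAB, ?_, fun h ↦ hB₁ (h hA₁), fun h ↦ hB₂ (h hA₁'), fun h ↦ hB₁ (h hA₂),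
    fun h ↦ hB₂ (h hA₂')⟩
  rw [hAB, sub_K4_eq_lowerClosure]
  exact subset_lowerClosure
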